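/- arXiv:2009.03225 — 2 statements merged into one kernel-verified Lean document; each statement's English description precedes it below -/
import Mathlib

section
/- Let λ be an admissible coefficient sequence satisfying effective Sato–Tate. Then there is a constant C' > 0 (depending on λ) such that for all y ≥ 16, ∑_{p prime, p > y, λ(p) = 0} 1/p ≤ C'·(log log y)²·(log y)^{−1/2}. -/
open scoped BigOperators
open Filter MeasureTheory

attribute [local instance] Classical.propDecidable

noncomputable section

/-- Number of primes `p ≤ x`. -/
def primePi (x : ℝ) : ℕ := Nat.card {p : ℕ | p.Prime ∧ (p : ℝ) ≤ x}

/-- `lam` is an admissible coefficient sequence: multiplicative, `lam 1 = 1`,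
and `lam p ∈ [-2,2]` at primes. -/
def IsAdmissibleSeq (lam : ℕ → ℝ) : Prop :=
  lam 1 = 1 ∧ (∀ m n : ℕ, Nat.Coprime m n → lam (m * n) = lam m * lam n) ∧
    ∀ p : ℕ, p.Prime → lam p ∈ Set.Icc (-2 : ℝ) 2

/-- Sato–Tate measure of the interval `[a,b] ⊆ [0,π]`. -/
def muST (a b : ℝ) : ℝ := (2 / Real.pi) * ∫ θ in a..b, Real.sin θ ^ 2

/-- Effective Sato–Tate for the angles `θ_p = arccos (lam p / 2)`. -/
def EffST (lam : ℕ → ℝ) : Prop :=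
  ∃ C > (0 : ℝ), ∀ a b : ℝ, 0 ≤ a → a ≤ b → b ≤ Real.pi → ∀ x : ℝ, 16 ≤ x →
    |(Nat.card {p : ℕ | p.Prime ∧ (p : ℝ) ≤ x ∧ Real.arccos (lam p / 2) ∈ Set.Icc a b} : ℝ)
        - muST a b * (primePi x : ℝ)|
      ≤ C * Real.log (Real.log x) * Real.log x ^ (-(1 : ℝ) / 2) * (primePi x : ℝ)

/-- The logarithmic integral `∫_2^Y dt / log t`. -/
def Li (Y : ℝ) : ℝ := ∫ t in (2 : ℝ)..Y, 1 / Real.log t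

/-- Effective Sato–Tate in arithmetic progressions. -/
def EffSTAP (lam : ℕ → ℝ) : Prop :=
  ∀ D : ℝ, 1 ≤ D → ∀ ε : ℝ, 0 < ε → ∃ C > (0 : ℝ), ∃ Y₀ : ℝ, ∀ Y : ℝ, Y₀ ≤ Y →
    ∀ q : ℕ, 2 ≤ q → (q : ℝ) ≤ Real.log (Real.log Y) ^ D →
      ∀ a : ℕ, Nat.Coprime a q → ∀ α β : ℝ, -2 ≤ α → α ≤ β → β ≤ 2 →
        |(Nat.card {p : ℕ | p.Prime ∧ (p : ℝ) ≤ Y ∧ p % q = a % q ∧ lam p ∈ Set.Icc α β} : ℝ)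
            - Li Y / (Real.pi * (Nat.totient q : ℝ)) * ∫ t in α..β, Real.sqrt (1 - (t / 2) ^ 2)|
          ≤ C * Li Y * Real.log (Real.log Y) ^ (-(1 : ℝ) / 2 + ε) / (Nat.totient q : ℝ)

/-- Hypothesis (A): nonvanishing and lower bounds at prime powers. -/
def HypA (lam : ℕ → ℝ) : Prop :=
  ∃ C > (0 : ℝ), ∀ p : ℕ, p.Prime → lam p ≠ 0 → ∀ ν : ℕ, 1 ≤ ν →
    lam (p ^ ν) ≠ 0 ∧ (p : ℝ) ^ (-(C * (ν : ℝ))) ≤ |lam (p ^ ν)|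

/-- The discriminant `∏_{i<j} (a_j - a_i)`. -/
def Delta {k : ℕ} (a : Fin k → ℕ) : ℤ :=
  ∏ q ∈ Finset.univ.filter (fun q : Fin k × Fin k => q.1 < q.2), ((a q.2 : ℤ) - (a q.1 : ℤ))

/-- The tuple `a` is admissible for the family `lam`. -/
def TupleAdmissible {k : ℕ} (lam : Fin k → ℕ → ℝ) (a : Fin k → ℕ) : Prop :=
  ∀ p : ℕ, p.Prime → ((p : ℤ) ∣ Delta a) → (∏ j, lam j p) = 0 →
    ∃ c : ℕ, ¬ ((p : ℤ) ∣ ∏ j, ((c : ℤ) + (a j : ℤ)))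

/-- `X(x) = #{n ≤ x : n + a_j ∈ N for all j}` with `N = ∩_j N_j`. -/
def Xcount {k : ℕ} (lam : Fin k → ℕ → ℝ) (a : Fin k → ℕ) (x : ℕ) : ℕ :=
  Nat.card {n : ℕ | n ≤ x ∧ ∀ i j : Fin k, lam i (n + a j) ≠ 0}

/-- Real-argument version of `Xcount`. -/
def XcountR {k : ℕ} (lam : Fin k → ℕ → ℝ) (a : Fin k → ℕ) (x : ℝ) : ℕ :=
  Nat.card {n : ℕ | (n : ℝ) ≤ x ∧ ∀ i j : Fin k, lam i (n + a j) ≠ 0}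

/-- The Erdős–Kac normalizing constant `c = (1 + π²/6)/2`. -/
def cEK : ℝ := (1 + Real.pi ^ 2 / 6) / 2

/-- The normalized quantity `X_j(n)`. -/
def XEK (lam : ℕ → ℝ) (n : ℕ) : ℝ :=
  (Real.log |lam n| + (1 / 2) * Real.log (Real.log n)) / Real.sqrt (cEK * Real.log (Real.log n))

/-- Membership `n ∈ N^{(ξ)}(X)`. -/
def memNxi {k : ℕ} (lam : Fin k → ℕ → ℝ) (ξ : ℝ → ℝ) (X : ℝ) (n : ℕ) : Prop :=
  (n : ℝ) ≤ X ∧ ∀ j, lam j n ≠ 0 ∧ ∀ p : ℕ, p.Prime → p ∣ n → ξ X ≤ |lam j p|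

/-- Elliott's conjecture on correlations of bounded multiplicative functions. -/
def ElliottConjecture : Prop :=
  ∀ k : ℕ, 1 ≤ k → ∀ g : Fin k → ℕ → ℂ,
    (∀ j, (∀ n, ‖g j n‖ ≤ 1) ∧ g j 1 = 1 ∧
        ∀ m n : ℕ, Nat.Coprime m n → g j (m * n) = g j m * g j n) →
    ∀ a : Fin k → ℕ, Function.Injective a →
      (∃ j₀ : Fin k, ∀ q : ℕ, ∀ χ : DirichletCharacter ℂ q,
          Filter.Tendsto (fun X : ℝ =>
              ⨅ t : Set.Icc (-X) X,
                ∑ p ∈ Finset.range (⌊X⌋₊ + 1),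
                  if Nat.Prime p then
                    (1 - (g j₀ p * (starRingEnd ℂ) (χ (p : ZMod q)) *
                        (p : ℂ) ^ (-((t : ℝ) : ℂ) * Complex.I)).re) / (p : ℝ)
                  else 0)
            Filter.atTop Filter.atTop) →
      Filter.Tendsto (fun X : ℕ =>
          ‖∑ n ∈ Finset.range (X + 1), ∏ j, g j (n + a j)‖ / (X : ℝ))
        Filter.atTop (nhds 0)

/-- The `k`-fold divisor function. -/
def dk (k : ℕ) (n : ℕ) : ℕ := Nat.card {t : Fin k → ℕ | (∀ i, 0 < t i) ∧ ∏ i, t i = n}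

/-- The truncated product `λ̃_{y}(n) = ∏_{p | n, p ≤ y, p ∤ Δ} lam p`. -/
def tildeLam (lam : ℕ → ℝ) (Δ : ℤ) (y : ℝ) (n : ℕ) : ℝ :=
  ∏ p ∈ n.primeFactors.filter (fun p : ℕ => (p : ℝ) ≤ y ∧ ¬ ((p : ℤ) ∣ Δ)), lam p

/-- The twisted multiplicative function `g_j^{ν,u}`. -/
def gcorr {k : ℕ} (lam : Fin k → ℕ → ℝ) (Y : ℝ) (j : Fin k) (ν : ℕ) (u : ℝ) (n : ℕ) : ℂ :=
  (if ∀ i, lam i n ≠ 0 then (1 : ℂ) else 0) * ((Real.sign (lam j n) ^ ν : ℝ) : ℂ) *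
    Complex.exp (2 * Real.pi * Complex.I *
      (u * Real.log |lam j n| / Real.sqrt (cEK * Real.log (Real.log Y))))

/-- Square of the pretentious distance `𝔻(f, g; Y)²`. -/
def pretDist2 (f g : ℕ → ℂ) (Y : ℝ) : ℝ :=
  ∑ p ∈ Finset.range (⌊Y⌋₊ + 1),
    if Nat.Prime p then (1 - (f p * (starRingEnd ℂ) (g p)).re) / (p : ℝ) else 0

/-! Taking the one-point interval `I = {π/2}` in effective Sato–Tate, where `μ_ST(I) = 0` and
`θ_p = π/2` exactly when `λ(p) = 0`, and combining with Chebyshev's bound `π(x) ≪ x / log x`,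
there are `≪ x log log x / (log x)^{3/2}` primes `p ≤ x` with `λ(p) = 0`. Split `p > y` into
blocks `(e^k y, e^{k+1} y]` and bound `1/p` by `1/(e^k y)` on each block: the ratio `e` makes
`log` of the block endpoints advance in unit steps, so the resulting sum of the decreasing
function `f(u) = log u / u^{3/2}` at `u = log y + k + 1` is at most
`∫_{log y}^∞ f = 2 (log log y + 2) / √(log y)`. -/

open Real

lemma exp_one_lt_log_sixteen : exp 1 < log 16 := by
  rw [show (16 : ℝ) = 2 ^ 4 by norm_num, log_pow]
  push_cast
  linarith [exp_one_lt_d9, log_two_gt_d9]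

lemma exp_one_le_log_of_sixteen_le {x : ℝ} (hx : 16 ≤ x) : exp 1 ≤ log x :=
  exp_one_lt_log_sixteen.le.trans (log_le_log (by norm_num) hx)

lemma one_le_log_log_of_sixteen_le {x : ℝ} (hx : 16 ≤ x) : 1 ≤ log (log x) := by
  simpa using log_le_log (exp_pos 1) (exp_one_le_log_of_sixteen_le hx)

lemma rpow_neg_one_half_eq_inv_sqrt {x : ℝ} (hx : 0 ≤ x) : x ^ (-(1 : ℝ) / 2) = (√x)⁻¹ := by
  rw [show (-(1 : ℝ) / 2) = -(1 / 2) by norm_num, rpow_neg hx, ← sqrt_eq_rpow]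

lemma primePi_eq_primeCounting_floor {x : ℝ} (hx : 0 ≤ x) :
    primePi x = Nat.primeCounting ⌊x⌋₊ := by
  rw [primePi, ← Nat.primesLE_card_eq_primeCounting, ← Nat.card_eq_finsetCard]
  congr! 2
  ext p
  simp [Nat.mem_primesLE, Nat.le_floor_iff hx, and_comm]

lemma primePi_le_div_log {x : ℝ} (hx : 1 < x) : (primePi x : ℝ) ≤ 5 * x / log x := by
  have hlog : 0 < log x := log_pos hx
  have hsqrt : √x * log x ≤ 2 * x := by
    have := log_le_sub_one_of_pos (sqrt_pos.2 (zero_lt_one.trans hx))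
    rw [log_sqrt (by linarith)] at this
    nlinarith [sq_sqrt (zero_le_one.trans hx.le), sqrt_nonneg x]
  have hlog4 : log 4 < 3 / 2 := by
    rw [show (4 : ℝ) = 2 ^ 2 by norm_num, log_pow]
    linarith [log_two_lt_d9]
  rw [primePi_eq_primeCounting_floor (by linarith), le_div_iff₀ hlog]
  calc (Nat.primeCounting ⌊x⌋₊ : ℝ) * log x
      ≤ (log 4 * x / log √x + √x) * log x := by
        gcongr; exact Chebyshev.pi_le_log4_mul_div hx
    _ = 2 * log 4 * x + √x * log x := by
        rw [log_sqrt (by linarith)]; field_simp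
    _ ≤ 5 * x := by nlinarith

lemma setOf_arccos_half_mem_Icc_pi_div_two (lam : ℕ → ℝ) (x : ℝ) :
    {p : ℕ | p.Prime ∧ (p : ℝ) ≤ x ∧ arccos (lam p / 2) ∈ Set.Icc (π / 2) (π / 2)}
      = {p : ℕ | p.Prime ∧ (p : ℝ) ≤ x ∧ lam p = 0} := by
  simp [arccos_eq_pi_div_two]

lemma EffST.card_vanishing_le {lam : ℕ → ℝ} (h : EffST lam) :
    ∃ C > (0 : ℝ), ∀ x : ℝ, 16 ≤ x →
      (Nat.card {p : ℕ | p.Prime ∧ (p : ℝ) ≤ x ∧ lam p = 0} : ℝ)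
        ≤ C * x * (log (log x) / (log x * √(log x))) := by
  obtain ⟨C, hC, hST⟩ := h
  refine ⟨5 * C, by positivity, fun x hx => ?_⟩
  have hlog : 0 < log x := log_pos (by linarith)
  have hloglog : 0 ≤ log (log x) := zero_le_one.trans (one_le_log_log_of_sixteen_le hx)
  have hpi := pi_pos
  have hcount := hST (π / 2) (π / 2) (by linarith) le_rfl (by linarith) x hx
  rw [setOf_arccos_half_mem_Icc_pi_div_two, muST, intervalIntegral.integral_same, mul_zero,
    zero_mul, sub_zero] at hcount
  rw [rpow_neg_one_half_eq_inv_sqrt hlog.le] at hcount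
  calc _ ≤ C * log (log x) * (√(log x))⁻¹ * (primePi x : ℝ) := (le_abs_self _).trans hcount
    _ ≤ C * log (log x) * (√(log x))⁻¹ * (5 * x / log x) := by
        gcongr; exact primePi_le_div_log (by linarith)
    _ = 5 * C * x * (log (log x) / (log x * √(log x))) := by
        field_simp

open Finset in
lemma sum_one_div_le_sum_card_div_pow {r y : ℝ} (hr : 0 < r) (hy : 0 < y) :
    ∀ (K : ℕ) (s : Finset ℕ), (∀ p ∈ s, y < p ∧ (p : ℝ) ≤ r ^ K * y) →
      ∑ p ∈ s, (1 / p : ℝ)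
        ≤ ∑ k ∈ range K, #(s.filter fun p : ℕ => (p : ℝ) ≤ r ^ (k + 1) * y) / (r ^ k * y)
  | 0, s, hs => by
    have : s = ∅ := eq_empty_of_forall_notMem fun p hp => by
      obtain ⟨hyp, hpy⟩ := hs p hp
      rw [pow_zero, one_mul] at hpy
      linarith
    simp [this]
  | K + 1, s, hs => by
    rw [← sum_filter_add_sum_filter_not s (fun p : ℕ => (p : ℝ) ≤ r ^ K * y), sum_range_succ]
    gcongr ?_ + ?_
    · refine (sum_one_div_le_sum_card_div_pow hr hy K _ fun p hp => ?_).trans ?_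
      · simp only [mem_filter] at hp
        exact ⟨(hs p hp.1).1, hp.2⟩
      · gcongr with k
        exact fun p hp => (mem_filter.1 hp).1
    · have hfull : s.filter (fun p : ℕ => (p : ℝ) ≤ r ^ (K + 1) * y) = s :=
         filter_true_of_mem fun p hp => (hs p hp).2
      rw [hfull, div_eq_mul_one_div, ← nsmul_eq_mul]
      refine (sum_le_card_nsmul _ _ _ fun p hp => ?_).trans (by gcongr; exact filter_subset _ s)
      simp only [mem_filter, not_le] at hp
      exact one_div_le_one_div_of_le (by positivity) hp.2.le

lemma antitoneOn_log_div_mul_sqrt :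
    AntitoneOn (fun u : ℝ => log u / (u * √u)) (Set.Ici (exp 1)) := by
  intro u hu v hv huv
  have hu0 : 0 < u := (exp_pos 1).trans_le hu
  simp only [← div_div]
  refine div_le_div₀ (div_nonneg (log_nonneg ?_) hu0.le) (log_div_self_antitoneOn hu hv huv)
    (sqrt_pos.2 hu0) (sqrt_le_sqrt huv)
  linarith [add_one_le_exp (1 : ℝ), Set.mem_Ici.1 hu]

lemma hasDerivAt_neg_two_mul_log_add_two_div_sqrt {x : ℝ} (hx : 0 < x) :
    HasDerivAt (fun u : ℝ => -(2 * (log u + 2) / √u)) (log x / (x * √x)) x := by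
  have hsqrt : √x ≠ 0 := (sqrt_pos.2 hx).ne'
  refine ((((hasDerivAt_log hx.ne').add_const 2).const_mul 2).div
    (hasDerivAt_sqrt hx.ne') hsqrt).neg.congr_deriv ?_
  set s := √x
  have hss : s * s = x := mul_self_sqrt hx.le
  rw [← hss]
  field_simp
  ring

lemma integral_log_div_mul_sqrt_le {a b : ℝ} (ha : 0 < a) (hb : 1 ≤ b)
    (hint : IntervalIntegrable (fun u : ℝ => log u / (u * √u)) MeasureTheory.volume a b) :
    ∫ u in a..b, log u / (u * √u) ≤ 2 * (log a + 2) / √a := by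
  rw [intervalIntegral.integral_eq_sub_of_hasDerivAt (fun u hu =>
    hasDerivAt_neg_two_mul_log_add_two_div_sqrt ?_) hint]
  · have : 0 ≤ 2 * (log b + 2) / √b := by have := log_nonneg hb; positivity
    linarith
  · rcases Set.mem_uIcc.1 hu with h | h <;> linarith [h.1]

lemma sum_log_div_mul_sqrt_le {a : ℝ} (ha : exp 1 ≤ a) (n : ℕ) :
    ∑ k ∈ Finset.range n, log (a + (k + 1 : ℕ)) / ((a + (k + 1 : ℕ)) * √(a + (k + 1 : ℕ)))
      ≤ 2 * (log a + 2) / √a := by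
  have hanti : AntitoneOn (fun u : ℝ => log u / (u * √u)) (Set.Icc a (a + n)) :=
    antitoneOn_log_div_mul_sqrt.mono fun u hu => ha.trans hu.1
  have ha1 : 1 ≤ a := by linarith [add_one_le_exp (1 : ℝ)]
  have han : a ≤ a + n := le_add_of_nonneg_right n.cast_nonneg
  refine hanti.sum_le_integral.trans (integral_log_div_mul_sqrt_le (by linarith) (ha1.trans han) ?_)
  exact AntitoneOn.intervalIntegrable (by rwa [Set.uIcc_of_le han])

open Finset in
lemma card_filter_vanishing_le_natCard {lam : ℕ → ℝ} {s : Finset ℕ} {x : ℝ}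
    (hs : ∀ p ∈ s, p.Prime ∧ lam p = 0) :
    (#(s.filter fun p : ℕ => (p : ℝ) ≤ x) : ℝ)
      ≤ Nat.card {p : ℕ | p.Prime ∧ (p : ℝ) ≤ x ∧ lam p = 0} := by
  have hfin : {p : ℕ | p.Prime ∧ (p : ℝ) ≤ x ∧ lam p = 0}.Finite :=
    (Set.finite_le_nat ⌊x⌋₊).subset fun p hp => Nat.le_floor hp.2.1
  have hsub : (↑(s.filter fun p : ℕ => (p : ℝ) ≤ x) : Set ℕ)
      ⊆ {p : ℕ | p.Prime ∧ (p : ℝ) ≤ x ∧ lam p = 0} := fun p hp => by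
    rw [coe_filter] at hp
    exact ⟨(hs p hp.1).1, hp.2, (hs p hp.1).2⟩
  have hncard := Set.ncard_le_ncard hsub hfin
  rw [Set.ncard_coe_finset] at hncard
  rw [Nat.card_coe_set_eq]
  exact_mod_cast hncard

open Finset in
lemma sum_range_vanishing_le {lam : ℕ → ℝ} {C y : ℝ} (hC : 0 ≤ C)
    (hcard : ∀ x : ℝ, 16 ≤ x → (Nat.card {p : ℕ | p.Prime ∧ (p : ℝ) ≤ x ∧ lam p = 0} : ℝ)
      ≤ C * x * (log (log x) / (log x * √(log x))))
    (hy : 16 ≤ y) (m : ℕ) :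
    ∑ p ∈ range m, (if p.Prime ∧ y < (p : ℝ) ∧ lam p = 0 then 1 / (p : ℝ) else 0)
      ≤ exp 1 * C * (2 * (log (log y) + 2) / √(log y)) := by
  have hy0 : 0 < y := by linarith
  set s := (range m).filter fun p : ℕ => p.Prime ∧ y < (p : ℝ) ∧ lam p = 0
  have hs : ∀ p ∈ s, y < p ∧ (p : ℝ) ≤ exp 1 ^ m * y := fun p hp => by
    simp only [s, mem_filter, mem_range] at hp
    refine ⟨hp.2.2.1, ?_⟩
    have hpm : (p : ℝ) ≤ m := by exact_mod_cast hp.1.le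
    rw [exp_one_pow]
    nlinarith [add_one_le_exp (m : ℝ), exp_pos (m : ℝ)]
  have hvanish : ∀ p ∈ s, p.Prime ∧ lam p = 0 := fun p hp => by
    simp only [s, mem_filter] at hp
    exact ⟨hp.2.1, hp.2.2.2⟩
  have hblock : ∀ k : ℕ, (#(s.filter fun p : ℕ => (p : ℝ) ≤ exp 1 ^ (k + 1) * y) : ℝ)
      / (exp 1 ^ k * y) ≤ exp 1 * C *
        (log (log y + (k + 1 : ℕ)) / ((log y + (k + 1 : ℕ)) * √(log y + (k + 1 : ℕ)))) := by
    intro k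
    have hx : 16 ≤ exp 1 ^ (k + 1) * y := by
      nlinarith [one_le_pow₀ (n := k + 1) (one_le_exp zero_le_one)]
    have hlog : log (exp 1 ^ (k + 1) * y) = log y + (k + 1 : ℕ) := by
      rw [log_mul (by positivity) hy0.ne', exp_one_pow, log_exp]; ring
    have hcount := (card_filter_vanishing_le_natCard hvanish).trans (hcard _ hx)
    rw [div_le_iff₀ (by positivity), ← hlog]
    convert hcount using 1
    rw [pow_succ]; ring
  rw [← sum_filter]
  calc ∑ p ∈ s, 1 / (p : ℝ)
      ≤ ∑ k ∈ range m, (#(s.filter fun p : ℕ => (p : ℝ) ≤ exp 1 ^ (k + 1) * y) : ℝ)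
          / (exp 1 ^ k * y) := sum_one_div_le_sum_card_div_pow (exp_pos 1) hy0 m s hs
    _ ≤ exp 1 * C * ∑ k ∈ range m,
          log (log y + (k + 1 : ℕ)) / ((log y + (k + 1 : ℕ)) * √(log y + (k + 1 : ℕ))) := by
        rw [mul_sum]; exact sum_le_sum fun k _ => hblock k
    _ ≤ _ := by
        gcongr
        exact sum_log_div_mul_sqrt_le (exp_one_le_log_of_sixteen_le hy) m

lemma two_mul_log_add_two_div_sqrt_le {L : ℝ} (hL : exp 1 ≤ L) :
    2 * (log L + 2) / √L ≤ 6 * log L ^ 2 * L ^ (-(1 : ℝ) / 2) := by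
  have hL0 : 0 < L := (exp_pos 1).trans_le hL
  have hlog : 1 ≤ log L := by simpa using log_le_log (exp_pos 1) hL
  rw [rpow_neg_one_half_eq_inv_sqrt hL0.le, ← div_eq_mul_inv]
  exact div_le_div_of_nonneg_right (by nlinarith) (sqrt_nonneg L)

theorem vanishing_primes_thin_general (lam : ℕ → ℝ)
    (hST : EffST lam) :
    ∃ C > (0 : ℝ), ∀ y : ℝ, 16 ≤ y →
      Summable (fun p : ℕ => if p.Prime ∧ y < (p : ℝ) ∧ lam p = 0 then 1 / (p : ℝ) else 0) ∧
      (∑' p : ℕ, if p.Prime ∧ y < (p : ℝ) ∧ lam p = 0 then 1 / (p : ℝ) else 0)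
        ≤ C * Real.log (Real.log y) ^ 2 * Real.log y ^ (-(1 : ℝ) / 2) := by
  obtain ⟨C, hC, hcard⟩ := hST.card_vanishing_le
  refine ⟨6 * exp 1 * C, by positivity, fun y hy => ?_⟩
  have hnonneg (p : ℕ) : 0 ≤ if p.Prime ∧ y < (p : ℝ) ∧ lam p = 0 then 1 / (p : ℝ) else 0 := by
    split_ifs <;> positivity
  have hpartial (m : ℕ) :
      ∑ p ∈ Finset.range m, (if p.Prime ∧ y < (p : ℝ) ∧ lam p = 0 then 1 / (p : ℝ) else 0)
        ≤ 6 * exp 1 * C * log (log y) ^ 2 * log y ^ (-(1 : ℝ) / 2) := by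
    refine (sum_range_vanishing_le hC.le hcard hy m).trans ?_
    have := two_mul_log_add_two_div_sqrt_le (exp_one_le_log_of_sixteen_le hy)
    have hC' : 0 ≤ exp 1 * C := by positivity
    nlinarith
  exact ⟨summable_of_sum_range_le hnonneg hpartial, Real.tsum_le_of_sum_range_le hnonneg hpartial⟩

/-- The primes at which `lam` vanishes form a very thin set:
`∑_{p > y, lam p = 0} 1/p ≪ (log log y)² (log y)^{-1/2}`. -/
theorem vanishing_primes_thin (lam : ℕ → ℝ) (hadm : IsAdmissibleSeq lam)
    (hST : EffST lam) :
    ∃ C > (0 : ℝ), ∀ y : ℝ, 16 ≤ y →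
      Summable (fun p : ℕ => if p.Prime ∧ y < (p : ℝ) ∧ lam p = 0 then 1 / (p : ℝ) else 0) ∧
      (∑' p : ℕ, if p.Prime ∧ y < (p : ℝ) ∧ lam p = 0 then 1 / (p : ℝ) else 0)
        ≤ C * Real.log (Real.log y) ^ 2 * Real.log y ^ (-(1 : ℝ) / 2) :=
  vanishing_primes_thin_general lam hST
end
end

section
/- Let S be a set of primes with ∑_{p ∈ S} 1/p < ∞, let k ≥ 1, and let g: ℕ → ℝ be a multiplicative function such that g(p) = 0 for every prime p ∉ S and |g(n)| ≤ d_k(n) for all n ≥ 1. Then there is a constant C > 0 (depending only on k and S) such that for all 10 ≤ y ≤ z ≤ x, ∑_{z < n ≤ x} |g(n)|/n ≤ C·(exp(−(log z)/(log y)) + ∑_{p prime, y < p ≤ x, p ∈ S} 1/p + 1/y). -/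
/-!
Split the `n ∈ (z, x]` into those whose prime factors are all `≤ y` and the rest.
For the `y`-smooth `n`, Rankin's trick with `σ = 1 - 1 / log y` gives
`1 / n ≤ exp (-log z / log y) * n ^ (-σ)`, and `∑ |g n| n ^ (-σ)` over `y`-smooth `n` is at most
an Euler product over the primes `q ≤ y`. Since `q ^ (1 - σ) ≤ e`, its local factor is
`1 + O(1 / q)` for `q ∈ S` and `1 + O(1 / q ^ 2)` otherwise (where `g q = 0`), so the product is
bounded in terms of `k` and `S` alone. Every other `n` has a prime factor `p > y`; the `n`
divisible by `p` contribute `O(1 / p)` times the same kind of Euler product if `p ∈ S`, and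
`O(1 / p ^ 2)` otherwise, because then `p ^ 2 ∣ n` whenever `g n ≠ 0`. Summing over `p > y`
gives the prime sum plus `O(1 / y)`.
-/

open scoped BigOperators
open Filter MeasureTheory

attribute [local instance] Classical.propDecidable

noncomputable section

namespace ThinSupportTail

open Finset Real

theorem dk_le_card_divisors_pow (k : ℕ) {n : ℕ} (hn : n ≠ 0) : dk k n ≤ #n.divisors ^ k := by
  let f : {t : Fin k → ℕ | (∀ i, 0 < t i) ∧ ∏ i, t i = n} → (Fin k → n.divisors) :=
    fun t i => ⟨t.1 i, Nat.mem_divisors.2 ⟨(dvd_prod_of_mem t.1 (mem_univ i)).trans t.2.2.dvd, hn⟩⟩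
  have hf : Function.Injective f := fun t u h =>
    Subtype.ext <| funext fun i => congrArg Subtype.val (congrFun h i)
  calc dk k n ≤ Nat.card (Fin k → n.divisors) := Nat.card_le_card_of_injective f hf
    _ = #n.divisors ^ k := by rw [Nat.card_eq_fintype_card, Fintype.card_fun, Fintype.card_coe,
      Fintype.card_fin]

theorem dk_prime_pow_le (k : ℕ) {p : ℕ} (hp : p.Prime) (a : ℕ) : dk k (p ^ a) ≤ (a + 1) ^ k := by
  simpa [Nat.divisors_prime_pow hp] using dk_le_card_divisors_pow k (pow_ne_zero a hp.ne_zero)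

def powGeomSum (k : ℕ) (τ : ℝ) : ℝ := ∑' b : ℕ, ((b : ℝ) + 1) ^ k * τ ^ b

theorem powGeomSum_nonneg (k : ℕ) {τ : ℝ} (hτ : 0 ≤ τ) : 0 ≤ powGeomSum k τ :=
  tsum_nonneg fun b => by positivity

theorem summable_succ_pow_mul_geometric (k : ℕ) {τ : ℝ} (hτ0 : 0 < τ) (hτ1 : τ < 1) :
    Summable fun b : ℕ => ((b : ℝ) + 1) ^ k * τ ^ b := by
  have h := (summable_nat_add_iff (f := fun b : ℕ => (b : ℝ) ^ k * τ ^ b) 1).2 <|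
    summable_pow_mul_geometric_of_norm_lt_one k (by rwa [norm_of_nonneg hτ0.le])
  refine (h.mul_left τ⁻¹).congr fun b => ?_
  push_cast
  rw [pow_succ]
  field_simp

theorem sum_Ico_pow_mul_pow_le (k : ℕ) {τ t : ℝ} (hτ0 : 0 < τ) (hτ1 : τ < 1) (ht0 : 0 ≤ t)
    (htτ : t ≤ τ) (j M : ℕ) :
    ∑ a ∈ Ico j M, ((a : ℝ) + 1) ^ k * t ^ a ≤ ((j : ℝ) + 1) ^ k * powGeomSum k τ * t ^ j := by
  rw [sum_Ico_eq_sum_range]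
  calc ∑ b ∈ range (M - j), (((j + b : ℕ) : ℝ) + 1) ^ k * t ^ (j + b)
      ≤ ∑ b ∈ range (M - j), ((j : ℝ) + 1) ^ k * t ^ j * (((b : ℝ) + 1) ^ k * τ ^ b) := by
        refine sum_le_sum fun b _ => ?_
        have hjb : ((j + b : ℕ) : ℝ) + 1 ≤ ((j : ℝ) + 1) * ((b : ℝ) + 1) := by
          push_cast; nlinarith [(j.cast_nonneg : (0 : ℝ) ≤ j), (b.cast_nonneg : (0 : ℝ) ≤ b)]
        calc (((j + b : ℕ) : ℝ) + 1) ^ k * t ^ (j + b)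
            ≤ (((j : ℝ) + 1) * ((b : ℝ) + 1)) ^ k * (t ^ j * τ ^ b) := by
              rw [pow_add]; gcongr
          _ = _ := by rw [mul_pow]; ring
    _ = ((j : ℝ) + 1) ^ k * t ^ j * ∑ b ∈ range (M - j), ((b : ℝ) + 1) ^ k * τ ^ b := by
        rw [mul_sum]
    _ ≤ ((j : ℝ) + 1) ^ k * t ^ j * powGeomSum k τ := by
        gcongr
        exact (summable_succ_pow_mul_geometric k hτ0 hτ1).sum_le_tsum _
          fun b _ => by positivity
    _ = _ := by ring

theorem sum_le_prod_sum_pow {F : ℕ → ℝ} (hF0 : ∀ n, 0 ≤ F n) (hF1 : F 1 = 1)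
    (hFm : ∀ m n, Nat.Coprime m n → F (m * n) = F m * F n) {Q : Finset ℕ} (s : ℕ → Finset ℕ)
    {A : Finset ℕ}
    (hA : ∀ n ∈ A, n ≠ 0 ∧ n.primeFactors ⊆ Q ∧ ∀ p ∈ Q, n.factorization p ∈ s p) :
    ∑ n ∈ A, F n ≤ ∏ p ∈ Q, ∑ a ∈ s p, F (p ^ a) := by
  have hF : ∀ n ∈ A, F n = ∏ p ∈ Q.attach, F (p.1 ^ n.factorization p) := fun n hn => by
    rw [Nat.multiplicative_factorization F hFm hF1 (hA n hn).1,
      Finsupp.prod_of_support_subset _ (by simpa using (hA n hn).2.1) _ (fun _ _ => by simp [hF1]),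
      prod_attach Q fun p => F (p ^ n.factorization p)]
  let φ : ℕ → ∀ p ∈ Q, ℕ := fun n p _ => n.factorization p
  have hφ : Set.InjOn φ A := fun m hm n hn h => by
    refine Nat.eq_of_factorization_eq (hA m hm).1 (hA n hn).1 fun p => ?_
    by_cases hp : p ∈ Q
    · exact congrFun (congrFun h p) hp
    · have h0 : ∀ n ∈ A, n.factorization p = 0 := fun n hn =>
        Finsupp.notMem_support_iff.1 fun h' => hp ((hA n hn).2.1 (by simpa using h'))
      rw [h0 m hm, h0 n hn]
  rw [prod_sum, sum_congr rfl hF,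
    ← sum_image (g := φ) (f := fun x => ∏ p ∈ Q.attach, F (p.1 ^ x p.1 p.2)) hφ]
  refine sum_le_sum_of_subset_of_nonneg (fun x hx => ?_) fun _ _ _ => prod_nonneg fun _ _ => hF0 _
  obtain ⟨n, hn, rfl⟩ := mem_image.1 hx
  exact mem_pi.2 fun p hp => (hA n hn).2.2 p hp

def tau : ℝ := 2 ^ (-(1 / 2 : ℝ))

theorem tau_pos : 0 < tau := rpow_pos_of_pos two_pos _

theorem tau_lt_one : tau < 1 := rpow_lt_one_of_one_lt_of_neg one_lt_two (by norm_num)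

theorem rpow_neg_le_tau {q : ℝ} (hq : 2 ≤ q) {σ : ℝ} (hσ : 1 / 2 ≤ σ) : q ^ (-σ) ≤ tau :=
  calc q ^ (-σ) ≤ q ^ (-(1 / 2 : ℝ)) := rpow_le_rpow_of_exponent_le (by linarith) (by linarith)
    _ ≤ tau := rpow_le_rpow_of_nonpos two_pos hq (by norm_num)

def primePowConst (k : ℕ) : ℝ := 3 ^ k * powGeomSum k tau

theorem primePowConst_nonneg (k : ℕ) : 0 ≤ primePowConst k :=
  mul_nonneg (by positivity) (powGeomSum_nonneg k tau_pos.le)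

def primeWeight (S : Set ℕ) (q : ℕ) : ℝ := if q ∈ S then 1 / (q : ℝ) else 1 / (q : ℝ) ^ 2

def eulerConst (S : Set ℕ) (k : ℕ) : ℝ := exp (primePowConst k * exp 2 * ∑' q, primeWeight S q)

variable {S : Set ℕ} {k : ℕ} {g : ℕ → ℝ}

theorem primeWeight_nonneg (q : ℕ) : 0 ≤ primeWeight S q := by
  unfold primeWeight; split_ifs <;> positivity

theorem primeWeight_le (q : ℕ) :
    primeWeight S q ≤ (if q ∈ S then 1 / (q : ℝ) else 0) + 1 / (q : ℝ) ^ 2 := by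
  unfold primeWeight; split_ifs <;> simp

theorem summable_primeWeight (hS : Summable fun p : ℕ => if p ∈ S then 1 / (p : ℝ) else 0) :
    Summable (primeWeight S) :=
  (hS.add (summable_one_div_nat_pow.2 one_lt_two)).of_nonneg_of_le primeWeight_nonneg
    primeWeight_le

theorem prod_le_exp_tsum_primeWeight (hS : Summable fun p : ℕ => if p ∈ S then 1 / (p : ℝ) else 0)
    {c : ℝ} (hc : 0 ≤ c) {Q : Finset ℕ} {u : ℕ → ℝ} (hu0 : ∀ q ∈ Q, 0 ≤ u q)
    (hu : ∀ q ∈ Q, u q ≤ 1 + c * primeWeight S q) :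
    ∏ q ∈ Q, u q ≤ exp (c * ∑' q, primeWeight S q) :=
  calc ∏ q ∈ Q, u q ≤ ∏ q ∈ Q, exp (c * primeWeight S q) := prod_le_prod hu0 fun q hq =>
        (hu q hq).trans (by linarith [add_one_le_exp (c * primeWeight S q)])
    _ = exp (c * ∑ q ∈ Q, primeWeight S q) := by rw [mul_sum, exp_sum]
    _ ≤ _ := by
        gcongr
        exact (summable_primeWeight hS).sum_le_tsum _ fun q _ => primeWeight_nonneg q

theorem sum_Ico_one_abs_prime_pow_le {q : ℕ} (hq : ∀ a : ℕ, |g (q ^ a)| ≤ ((a : ℝ) + 1) ^ k)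
    (hgq : q ∉ S → g q = 0) {t : ℝ} (ht0 : 0 ≤ t) (htτ : t ≤ tau) (M : ℕ) :
    ∑ a ∈ Ico 1 M, |g (q ^ a)| * t ^ a ≤ primePowConst k * (if q ∈ S then t else t ^ 2) := by
  have hbound : ∀ j, ∑ a ∈ Ico j M, |g (q ^ a)| * t ^ a
      ≤ ((j : ℝ) + 1) ^ k * powGeomSum k tau * t ^ j := fun j =>
    (sum_le_sum fun a _ => by gcongr; exact hq a).trans
      (sum_Ico_pow_mul_pow_le k tau_pos tau_lt_one ht0 htτ j M)
  have := powGeomSum_nonneg k tau_pos.le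
  unfold primePowConst
  split_ifs with hqS
  · calc _ ≤ (((1 : ℕ) : ℝ) + 1) ^ k * powGeomSum k tau * t ^ 1 := hbound 1
      _ ≤ 3 ^ k * powGeomSum k tau * t := by rw [pow_one]; gcongr; norm_num
  · rw [← sum_subset (Ico_subset_Ico_left one_le_two) fun a ha ha' => ?_]
    · exact (hbound 2).trans_eq (by norm_num)
    · obtain rfl : a = 1 := by simp only [mem_Ico] at ha ha'; omega
      simp [hgq hqS]

theorem sum_range_abs_prime_pow_le (hg1 : g 1 = 1) {q : ℕ}
    (hq : ∀ a : ℕ, |g (q ^ a)| ≤ ((a : ℝ) + 1) ^ k) (hgq : q ∉ S → g q = 0) {t : ℝ} (ht0 : 0 ≤ t)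
    (htτ : t ≤ tau) (hte : t ≤ exp 1 / q) (M : ℕ) :
    ∑ a ∈ range (M + 1), |g (q ^ a)| * t ^ a ≤ 1 + primePowConst k * exp 2 * primeWeight S q := by
  rw [sum_range_eq_add_Ico _ M.succ_pos, pow_zero, pow_zero, hg1, abs_one, mul_one, mul_assoc]
  gcongr
  refine (sum_Ico_one_abs_prime_pow_le hq hgq ht0 htτ _).trans
    (mul_le_mul_of_nonneg_left ?_ (primePowConst_nonneg k))
  unfold primeWeight
  split_ifs
  · calc t ≤ exp 1 / q := hte
      _ ≤ exp 2 * (1 / q) := by rw [mul_one_div]; gcongr; norm_num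
  · calc t ^ 2 ≤ (exp 1 / q) ^ 2 := by gcongr
      _ = exp 2 * (1 / (q : ℝ) ^ 2) := by rw [div_pow, exp_one_pow]; push_cast; ring

theorem prod_sum_range_le_eulerConst
    (hS : Summable fun p : ℕ => if p ∈ S then 1 / (p : ℝ) else 0) (hg1 : g 1 = 1)
    (hgS : ∀ p : ℕ, p.Prime → p ∉ S → g p = 0)
    (hpk : ∀ p : ℕ, p.Prime → ∀ a : ℕ, |g (p ^ a)| ≤ ((a : ℝ) + 1) ^ k)
    {Q : Finset ℕ} (hQ : ∀ q ∈ Q, q.Prime) {t : ℕ → ℝ}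
    (ht : ∀ q ∈ Q, 0 ≤ t q ∧ t q ≤ tau ∧ t q ≤ exp 1 / q) (M : ℕ) :
    ∏ q ∈ Q, ∑ a ∈ range (M + 1), |g (q ^ a)| * t q ^ a ≤ eulerConst S k :=
  prod_le_exp_tsum_primeWeight hS (by have := primePowConst_nonneg k; positivity)
    (fun q hq => sum_nonneg fun a _ => by have := (ht q hq).1; positivity) fun q hq =>
      sum_range_abs_prime_pow_le hg1 (hpk q (hQ q hq)) (hgS q (hQ q hq)) (ht q hq).1
        (ht q hq).2.1 (ht q hq).2.2 M

theorem sum_abs_mul_rpow_neg_le_prod (hg1 : g 1 = 1)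
    (hgm : ∀ m n : ℕ, Nat.Coprime m n → g (m * n) = g m * g n) (σ : ℝ) {Q : Finset ℕ}
    (s : ℕ → Finset ℕ) {A : Finset ℕ}
    (hA : ∀ n ∈ A, n ≠ 0 ∧ n.primeFactors ⊆ Q ∧ ∀ p ∈ Q, n.factorization p ∈ s p) :
    ∑ n ∈ A, |g n| * (n : ℝ) ^ (-σ) ≤ ∏ p ∈ Q, ∑ a ∈ s p, |g (p ^ a)| * ((p : ℝ) ^ (-σ)) ^ a := by
  refine (sum_le_prod_sum_pow (F := fun n => |g n| * (n : ℝ) ^ (-σ)) (fun n => by positivity)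
    (by simp [hg1]) (fun m n h => ?_) s hA).trans_eq ?_
  · rw [hgm m n h, abs_mul, Nat.cast_mul, mul_rpow (Nat.cast_nonneg m) (Nat.cast_nonneg n)]
    ring
  · simp_rw [Nat.cast_pow, rpow_pow_comm (Nat.cast_nonneg _)]

theorem inv_le_exp_mul_rpow {n z y : ℝ} (hz : 0 < z) (hzn : z ≤ n) (hy : 0 ≤ log y) :
    n⁻¹ ≤ exp (-(log z / log y)) * n ^ (-(1 - 1 / log y)) := by
  rw [← rpow_neg_one, show (-1 : ℝ) = -(1 - 1 / log y) + -(1 / log y) by ring,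
    rpow_add (hz.trans_le hzn), mul_comm (exp _)]
  refine mul_le_mul_of_nonneg_left ?_ (rpow_nonneg (hz.le.trans hzn) _)
  calc n ^ (-(1 / log y)) ≤ z ^ (-(1 / log y)) :=
        rpow_le_rpow_of_nonpos hz hzn (neg_nonpos.2 (by positivity))
    _ = exp (-(log z / log y)) := by rw [rpow_def_of_pos hz]; ring_nf

theorem rpow_neg_le_exp_one_div {q y : ℝ} (hq : 1 ≤ q) (hqy : q ≤ y) :
    q ^ (-(1 - 1 / log y)) ≤ exp 1 / q := by
  have hq0 : 0 < q := one_pos.trans_le hq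
  rw [neg_sub, rpow_sub hq0, rpow_one, rpow_def_of_pos hq0, mul_one_div]
  gcongr
  exact div_le_one_of_le₀ (log_le_log hq0 hqy) (log_nonneg (hq.trans hqy))

theorem sum_abs_div_le_of_smooth (hS : Summable fun p : ℕ => if p ∈ S then 1 / (p : ℝ) else 0)
    (hg1 : g 1 = 1) (hgm : ∀ m n : ℕ, Nat.Coprime m n → g (m * n) = g m * g n)
    (hgS : ∀ p : ℕ, p.Prime → p ∉ S → g p = 0)
    (hpk : ∀ p : ℕ, p.Prime → ∀ a : ℕ, |g (p ^ a)| ≤ ((a : ℝ) + 1) ^ k)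
    {y z : ℝ} (hy : exp 2 ≤ y) (hz : 0 < z) {N : ℕ} {A : Finset ℕ}
    (hA : ∀ n ∈ A, n ≤ N ∧ z < n ∧ ∀ p ∈ n.primeFactors, (p : ℝ) ≤ y) :
    ∑ n ∈ A, |g n| / n ≤ exp (-(log z / log y)) * eulerConst S k := by
  have hlog : 2 ≤ log y := (le_log_iff_exp_le (exp_pos 2 |>.trans_le hy)).2 hy
  set s := 1 - 1 / log y
  set Q := (range (N + 1)).filter fun q : ℕ => q.Prime ∧ (q : ℝ) ≤ y
  have hQ : ∀ q ∈ Q, q.Prime ∧ (q : ℝ) ≤ y := fun q hq => (mem_filter.1 hq).2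
  have hA' : ∀ n ∈ A, n ≠ 0 ∧ n.primeFactors ⊆ Q ∧ ∀ q ∈ Q, n.factorization q ∈ range (N + 1) :=
    fun n hn => by
      obtain ⟨hnN, hzn, hsmooth⟩ := hA n hn
      have hn0 : n ≠ 0 := by rintro rfl; rw [Nat.cast_zero] at hzn; linarith
      refine ⟨hn0, fun p hp => ?_, fun q _ => mem_range.2 ?_⟩
      · exact mem_filter.2 ⟨mem_range.2 (by have := Nat.le_of_mem_primeFactors hp; omega),
          Nat.prime_of_mem_primeFactors hp, hsmooth p hp⟩
      · have := Nat.factorization_lt q hn0; omega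
  calc ∑ n ∈ A, |g n| / n
      ≤ ∑ n ∈ A, exp (-(log z / log y)) * (|g n| * (n : ℝ) ^ (-s)) := sum_le_sum fun n hn => by
        rw [div_eq_mul_inv, mul_left_comm]
        gcongr
        exact inv_le_exp_mul_rpow hz (hA n hn).2.1.le (by linarith)
    _ = exp (-(log z / log y)) * ∑ n ∈ A, |g n| * (n : ℝ) ^ (-s) := by rw [mul_sum]
    _ ≤ exp (-(log z / log y)) * eulerConst S k := by
        gcongr
        refine (sum_abs_mul_rpow_neg_le_prod hg1 hgm s _ hA').trans
          (prod_sum_range_le_eulerConst hS hg1 hgS hpk (fun q hq => (hQ q hq).1) (fun q hq => ?_) N)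
        have hq2 : (2 : ℝ) ≤ q := by exact_mod_cast (hQ q hq).1.two_le
        exact ⟨by positivity, rpow_neg_le_tau hq2 (by
          have : 1 / log y ≤ 1 / 2 := one_div_le_one_div_of_le two_pos hlog
          linarith), rpow_neg_le_exp_one_div (by linarith) (hQ q hq).2⟩

theorem sum_le_sum_sum_filter {ι κ : Type*} {f : ι → ℝ} {A : Finset ι} {P : Finset κ}
    (r : κ → ι → Prop) [∀ p, DecidablePred (r p)] (hf : ∀ n ∈ A, 0 ≤ f n)
    (hcov : ∀ n ∈ A, ∃ p ∈ P, r p n) :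
    ∑ n ∈ A, f n ≤ ∑ p ∈ P, ∑ n ∈ A.filter (r p), f n := by
  simp_rw [sum_filter]
  rw [sum_comm]
  refine sum_le_sum fun n hn => ?_
  obtain ⟨p, hp, hpn⟩ := hcov n hn
  calc f n = if r p n then f n else 0 := (if_pos hpn).symm
    _ ≤ ∑ p ∈ P, if r p n then f n else 0 :=
        single_le_sum (f := fun p => if r p n then f n else 0)
          (fun p _ => by split_ifs <;> [exact hf n hn; exact le_rfl]) hp

theorem sum_abs_div_le_of_dvd (hS : Summable fun p : ℕ => if p ∈ S then 1 / (p : ℝ) else 0)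
    (hg1 : g 1 = 1) (hgm : ∀ m n : ℕ, Nat.Coprime m n → g (m * n) = g m * g n)
    (hgS : ∀ p : ℕ, p.Prime → p ∉ S → g p = 0)
    (hpk : ∀ p : ℕ, p.Prime → ∀ a : ℕ, |g (p ^ a)| ≤ ((a : ℝ) + 1) ^ k)
    {Q : Finset ℕ} (hQ : ∀ q ∈ Q, q.Prime) {p : ℕ} (hpQ : p ∈ Q) {N : ℕ} {A : Finset ℕ}
    (hA : ∀ n ∈ A, n ≠ 0 ∧ n ≤ N ∧ n.primeFactors ⊆ Q ∧ p ∣ n) :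
    ∑ n ∈ A, |g n| / n ≤ primePowConst k * primeWeight S p * eulerConst S k := by
  have hp := hQ p hpQ
  have htq : ∀ q : ℕ, q.Prime → 0 ≤ (q : ℝ)⁻¹ ∧ (q : ℝ)⁻¹ ≤ tau ∧ (q : ℝ)⁻¹ ≤ exp 1 / q :=
    fun q hq => by
      have hq2 : (2 : ℝ) ≤ q := by exact_mod_cast hq.two_le
      refine ⟨by positivity, ?_, ?_⟩
      · have := rpow_neg_le_tau hq2 (σ := 1) (by norm_num)
        rwa [rpow_neg_one] at this
      · rw [inv_eq_one_div]; gcongr; exact one_le_exp zero_le_one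
  let s := Function.update (fun _ => range (N + 1)) p (Ico 1 (N + 1))
  have h := sum_abs_mul_rpow_neg_le_prod hg1 hgm 1 s (A := A) (Q := Q) fun n hn => by
    obtain ⟨hn0, hnN, hnQ, hpn⟩ := hA n hn
    refine ⟨hn0, hnQ, fun q _ => ?_⟩
    have hlt := Nat.factorization_lt q hn0
    rcases eq_or_ne q p with rfl | hqp
    · have := hp.factorization_pos_of_dvd hn0 hpn
      simp only [s, Function.update_self, mem_Ico]; omega
    · simp only [s, Function.update_of_ne hqp, mem_range]; omega
  simp only [rpow_neg_one, ← div_eq_mul_inv] at h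
  rw [← mul_prod_erase Q _ hpQ] at h
  refine h.trans (mul_le_mul ?_ ?_ (prod_nonneg fun q _ => sum_nonneg fun a _ => by positivity)
    (mul_nonneg (primePowConst_nonneg k) (primeWeight_nonneg p)))
  · simp only [s, Function.update_self]
    refine (sum_Ico_one_abs_prime_pow_le (hpk p hp) (hgS p hp) (htq p hp).1 (htq p hp).2.1
      _).trans_eq ?_
    unfold primeWeight
    split_ifs <;> simp
  · calc ∏ q ∈ Q.erase p, ∑ a ∈ s q, |g (q ^ a)| * (q : ℝ)⁻¹ ^ a
        = ∏ q ∈ Q.erase p, ∑ a ∈ range (N + 1), |g (q ^ a)| * (q : ℝ)⁻¹ ^ a :=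
          prod_congr rfl fun q hq => by simp only [s, Function.update_of_ne (ne_of_mem_erase hq)]
      _ ≤ eulerConst S k := prod_sum_range_le_eulerConst hS hg1 hgS hpk
          (fun q hq => hQ q (mem_of_mem_erase hq))
          (fun q hq => htq q (hQ q (mem_of_mem_erase hq))) N

theorem sum_primeWeight_le {y : ℝ} (hy : 0 < y) (N : ℕ) :
    ∑ p ∈ (range (N + 1)).filter (fun p : ℕ => p.Prime ∧ y < p), primeWeight S p
      ≤ (∑ p ∈ range (N + 1), if p.Prime ∧ y < p ∧ p ∈ S then 1 / (p : ℝ) else 0) + 2 / y := by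
  refine (sum_le_sum fun p _ => primeWeight_le p).trans ?_
  rw [sum_add_distrib, sum_filter]
  simp only [← ite_and, and_assoc]
  gcongr
  calc ∑ p ∈ (range (N + 1)).filter (fun p : ℕ => p.Prime ∧ y < p), 1 / (p : ℝ) ^ 2
      ≤ ∑ i ∈ Ioo ⌊y⌋₊ (N + 1), ((i : ℝ) ^ 2)⁻¹ := by
        simp_rw [one_div]
        refine sum_le_sum_of_subset_of_nonneg (fun p hp => ?_) fun _ _ _ => by positivity
        obtain ⟨hpN, -, hyp⟩ := mem_filter.1 hp
        exact mem_Ioo.2 ⟨(Nat.floor_lt hy.le).2 hyp, mem_range.1 hpN⟩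
    _ ≤ 2 / (⌊y⌋₊ + 1) := sum_Ioo_inv_sq_le _ _
    _ ≤ 2 / y := by gcongr; exact (Nat.lt_floor_add_one y).le

theorem sum_abs_div_le_of_rough (hS : Summable fun p : ℕ => if p ∈ S then 1 / (p : ℝ) else 0)
    (hg1 : g 1 = 1) (hgm : ∀ m n : ℕ, Nat.Coprime m n → g (m * n) = g m * g n)
    (hgS : ∀ p : ℕ, p.Prime → p ∉ S → g p = 0)
    (hpk : ∀ p : ℕ, p.Prime → ∀ a : ℕ, |g (p ^ a)| ≤ ((a : ℝ) + 1) ^ k)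
    {y : ℝ} (hy : 0 < y) {N : ℕ} {A : Finset ℕ}
    (hA : ∀ n ∈ A, n ≠ 0 ∧ n ≤ N ∧ ∃ p ∈ n.primeFactors, y < p) :
    ∑ n ∈ A, |g n| / n ≤ primePowConst k * eulerConst S k *
      ((∑ p ∈ range (N + 1), if p.Prime ∧ y < p ∧ p ∈ S then 1 / (p : ℝ) else 0) + 2 / y) := by
  set P := (range (N + 1)).filter fun p : ℕ => p.Prime ∧ y < p
  set Q := (range (N + 1)).filter Nat.Prime
  have hPQ : P ⊆ Q := fun p hp => by
    obtain ⟨hpN, hp, -⟩ := mem_filter.1 hp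
    exact mem_filter.2 ⟨hpN, hp⟩
  have hfactor : ∀ n ∈ A, n.primeFactors ⊆ Q := fun n hn p hp => mem_filter.2
    ⟨mem_range.2 (by have := Nat.le_of_mem_primeFactors hp; have := (hA n hn).2.1; omega),
      Nat.prime_of_mem_primeFactors hp⟩
  calc ∑ n ∈ A, |g n| / n
      ≤ ∑ p ∈ P, ∑ n ∈ A.filter (p ∣ ·), |g n| / n :=
        sum_le_sum_sum_filter _ (fun n _ => by positivity) fun n hn => by
          obtain ⟨-, hnN, p, hp, hyp⟩ := hA n hn
          exact ⟨p, mem_filter.2 ⟨(hfactor n hn hp |> mem_filter.1).1,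
            Nat.prime_of_mem_primeFactors hp, hyp⟩, Nat.dvd_of_mem_primeFactors hp⟩
    _ ≤ ∑ p ∈ P, primePowConst k * primeWeight S p * eulerConst S k :=
        sum_le_sum fun p hp => sum_abs_div_le_of_dvd hS hg1 hgm hgS hpk (fun q hq => (mem_filter.1 hq).2)
          (hPQ hp) fun n hn => by
            obtain ⟨hnA, hpn⟩ := mem_filter.1 hn
            exact ⟨(hA n hnA).1, (hA n hnA).2.1, hfactor n hnA, hpn⟩
    _ = primePowConst k * eulerConst S k * ∑ p ∈ P, primeWeight S p := by
        rw [mul_sum]; exact sum_congr rfl fun p _ => by ring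
    _ ≤ _ := by
        have := primePowConst_nonneg k
        have : 0 < eulerConst S k := exp_pos _
        gcongr
        exact sum_primeWeight_le hy N

theorem exp_two_le_ten : exp 2 ≤ 10 :=
  calc exp 2 = exp 1 ^ 2 := by rw [exp_one_pow]; norm_num
    _ ≤ 10 := by nlinarith [exp_one_lt_d9, exp_pos 1]

end ThinSupportTail

open ThinSupportTail

theorem thin_support_tail_general (S : Set ℕ)
    (hS : Summable fun p : ℕ => if p ∈ S then 1 / (p : ℝ) else 0)
    (k : ℕ) (g : ℕ → ℝ)
    (hg1 : g 1 = 1) (hgm : ∀ m n : ℕ, Nat.Coprime m n → g (m * n) = g m * g n)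
    (hgS : ∀ p : ℕ, p.Prime → p ∉ S → g p = 0)
    (hgd : ∀ n : ℕ, 1 ≤ n → |g n| ≤ (dk k n : ℝ)) :
    ∃ C > (0 : ℝ), ∀ y z x : ℝ, 10 ≤ y → y ≤ z → z ≤ x →
      (∑ n ∈ Finset.range (⌊x⌋₊ + 1), if z < (n : ℝ) then |g n| / (n : ℝ) else 0)
        ≤ C * (Real.exp (-(Real.log z / Real.log y)) +
          (∑ p ∈ Finset.range (⌊x⌋₊ + 1),
            if p.Prime ∧ y < (p : ℝ) ∧ p ∈ S then 1 / (p : ℝ) else 0) + 1 / y) := by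
  have hpk : ∀ p : ℕ, p.Prime → ∀ a : ℕ, |g (p ^ a)| ≤ ((a : ℝ) + 1) ^ k := fun p hp a =>
    (hgd _ (Nat.one_le_pow a p hp.pos)).trans (by exact_mod_cast dk_prime_pow_le k hp a)
  have hK := primePowConst_nonneg k
  have hT : 0 < eulerConst S k := Real.exp_pos _
  refine ⟨eulerConst S k * (1 + 2 * primePowConst k), by positivity, fun y z x hy hyz hzx => ?_⟩
  have hz : 0 < z := by linarith
  rw [← Finset.sum_filter,
    ← Finset.sum_filter_add_sum_filter_not _ fun n : ℕ => ∀ p ∈ n.primeFactors, (p : ℝ) ≤ y]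
  have hE := (Real.exp_pos (-(Real.log z / Real.log y))).le
  have hP : 0 ≤ ∑ p ∈ Finset.range (⌊x⌋₊ + 1),
      if p.Prime ∧ y < (p : ℝ) ∧ p ∈ S then 1 / (p : ℝ) else 0 :=
    Finset.sum_nonneg fun p _ => by split_ifs <;> positivity
  have hy' : 0 ≤ 1 / y := by positivity
  refine (add_le_add
    (sum_abs_div_le_of_smooth hS hg1 hgm hgS hpk (exp_two_le_ten.trans hy) hz (N := ⌊x⌋₊) fun n hn => ?_)
    (sum_abs_div_le_of_rough hS hg1 hgm hgS hpk (y := y) (by linarith) (N := ⌊x⌋₊) fun n hn => ?_)).trans ?_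
  · simp only [Finset.mem_filter, Finset.mem_range] at hn
    exact ⟨by omega, hn.1.2, hn.2⟩
  · simp only [Finset.mem_filter, Finset.mem_range, not_forall, not_le, exists_prop] at hn
    refine ⟨?_, by omega, hn.2⟩
    rintro rfl
    exact absurd hn.1.2 (by simpa using hz.le)
  · rw [show 2 / y = 2 * (1 / y) by ring]
    nlinarith [mul_nonneg hT.le hP, mul_nonneg hT.le hy', mul_nonneg (mul_nonneg hT.le hK) hE,
      mul_nonneg (mul_nonneg hT.le hK) hP]

/-- Tail bound for the harmonic sum of a multiplicative function supported on
a thin set of primes and dominated by the `k`-fold divisor function. -/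
theorem thin_support_tail (S : Set ℕ) (hSp : ∀ p ∈ S, Nat.Prime p)
    (hS : Summable fun p : ℕ => if p ∈ S then 1 / (p : ℝ) else 0)
    (k : ℕ) (hk : 1 ≤ k) (g : ℕ → ℝ)
    (hg1 : g 1 = 1) (hgm : ∀ m n : ℕ, Nat.Coprime m n → g (m * n) = g m * g n)
    (hgS : ∀ p : ℕ, p.Prime → p ∉ S → g p = 0)
    (hgd : ∀ n : ℕ, 1 ≤ n → |g n| ≤ (dk k n : ℝ)) :
    ∃ C > (0 : ℝ), ∀ y z x : ℝ, 10 ≤ y → y ≤ z → z ≤ x →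
      (∑ n ∈ Finset.range (⌊x⌋₊ + 1), if z < (n : ℝ) then |g n| / (n : ℝ) else 0)
        ≤ C * (Real.exp (-(Real.log z / Real.log y)) +
          (∑ p ∈ Finset.range (⌊x⌋₊ + 1),
            if p.Prime ∧ y < (p : ℝ) ∧ p ∈ S then 1 / (p : ℝ) else 0) + 1 / y) :=
  thin_support_tail_general S hS k g hg1 hgm hgS hgd

end
end
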